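/- CoPhIK preserves linear constraints up to a bounded error (Theorem 2.2): under the stated assumptions, let ρ ∈ [0,1], μ_d ∈ ℝ, y_L, y_H ∈ ℝᴺ, and let k_d : D × D → ℝ be a kernel with C₂ the invertible N×N matrix (C₂)ᵢⱼ = k_d(x⁽ⁱ⁾, x⁽ʲ⁾) and C₁ = C_MC. Define a = C₁⁻¹(y_H − μ_MC(X)), b = C₁⁻¹(y_H − y_L), q = C₂⁻¹(y_H − ρ·y_L − μ_d·𝟙), where μ_MC(X) = (μ_MC(x⁽¹⁾), …, μ_MC(x⁽ᴺ⁾))ᵀ and 𝟙 is the all-ones vector, and define ŷ : D → ℝ by ŷ(x) = ρ·(μ_MC(x) + ∑_{i=1}^N aᵢ·k_MC(x, x⁽ⁱ⁾)) − ρ·∑_{i=1}^N bᵢ·k_MC(x, x⁽ⁱ⁾) + μ_d + ∑_{i=1}^N qᵢ·k_d(x, x⁽ⁱ⁾). Then ‖L(ŷ) − ḡ‖ ≤ ρ·ε + (1−ρ)·‖ḡ‖ + ρ·(2ε·√(M/(M−1)) + σ_g)·‖C₁⁻¹‖₂·‖y_L − μ_MC(X)‖₂·∑_{i=1}^N σᵢ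 + ‖L(c_{μ_d})‖ + ‖C₂⁻¹‖₂·‖y_H − ρ·y_L − μ_d·𝟙‖₂·∑_{i=1}^N ‖L(k_d(·, x⁽ⁱ⁾))‖, where c_{μ_d} : D → ℝ is the constant function with value μ_d and k_d(·, x⁽ⁱ⁾) denotes the function x ↦ k_d(x, x⁽ⁱ⁾). -/

import Mathlib

set_option maxHeartbeats 1000000

/-- The Euclidean (ℓ²) norm of a vector in `ℝᴺ`. -/
noncomputable def euclNorm {N : ℕ} (v : Fin N → ℝ) : ℝ :=
  ‖(EuclideanSpace.equiv (Fin N) ℝ).symm v‖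

/-- The operator (spectral) norm of an `N×N` real matrix with respect to the
Euclidean norm. -/
noncomputable def matOpNorm {N : ℕ} (A : Matrix (Fin N) (Fin N) ℝ) : ℝ :=
  ‖Matrix.toEuclideanCLM (𝕜 := ℝ) A‖

lemma euclNorm_eq {N : ℕ} (v : Fin N → ℝ) :
    euclNorm v = Real.sqrt (∑ i, v i ^ 2) := by
  rw [euclNorm, EuclideanSpace.norm_eq]
  congr 1
  refine Finset.sum_congr rfl fun i _ => ?_
  simp [Real.norm_eq_abs, sq_abs]

lemma abs_le_euclNorm {N : ℕ} (v : Fin N → ℝ) (i : Fin N) : |v i| ≤ euclNorm v := by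
  rw [euclNorm_eq, ← Real.sqrt_sq_eq_abs]
  exact Real.sqrt_le_sqrt (Finset.single_le_sum (f := fun j => v j ^ 2)
    (fun j _ => sq_nonneg _) (Finset.mem_univ i))

lemma euclNorm_mulVec_le {N : ℕ} (A : Matrix (Fin N) (Fin N) ℝ) (v : Fin N → ℝ) :
    euclNorm (A.mulVec v) ≤ matOpNorm A * euclNorm v := by
  have h := (Matrix.toEuclideanCLM (𝕜 := ℝ) A).le_opNorm
    ((EuclideanSpace.equiv (Fin N) ℝ).symm v)
  have he : (Matrix.toEuclideanCLM (𝕜 := ℝ) A) ((EuclideanSpace.equiv (Fin N) ℝ).symm v)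
      = (EuclideanSpace.equiv (Fin N) ℝ).symm (A.mulVec v) := rfl
  rw [he] at h
  exact h

lemma matOpNorm_nonneg {N : ℕ} (A : Matrix (Fin N) (Fin N) ℝ) : 0 ≤ matOpNorm A :=
  norm_nonneg _

lemma euclNorm_nonneg {N : ℕ} (v : Fin N → ℝ) : 0 ≤ euclNorm v :=
  norm_nonneg _

/-- Theorem 2.2: CoPhIK preserves linear constraints up to a
bounded error:
`‖L(ŷ) − ḡ‖ ≤ ρ·ε + (1−ρ)·‖ḡ‖ + ρ·(2ε·√(M/(M−1)) + σ_g)·‖C₁⁻¹‖₂·‖y_L − μ_MC(X)‖₂·∑ᵢ σᵢ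
  + ‖L(c_{μ_d})‖ + ‖C₂⁻¹‖₂·‖y_H − ρ·y_L − μ_d·𝟙‖₂·∑ᵢ ‖L(k_d(·, x⁽ⁱ⁾))‖`. -/
theorem cophik_error_bound
    {D : Type*} [Nonempty D] {N M : ℕ} (hM : 2 ≤ M)
    (x : Fin N → D) (Y : Fin M → D → ℝ)
    {F : Type*} [NormedAddCommGroup F] [NormedSpace ℝ F]
    (L : (D → ℝ) →ₗ[ℝ] F) (ε : ℝ) (hε : 0 ≤ ε) (g : Fin M → F)
    (hg : ∀ m, ‖L (Y m) - g m‖ ≤ ε)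
    (μMC : D → ℝ) (hμ : ∀ z, μMC z = (1 / (M : ℝ)) * ∑ m, Y m z)
    (kMC : D → D → ℝ)
    (hk : ∀ z z', kMC z z' =
      (1 / ((M : ℝ) - 1)) * ∑ m, (Y m z - μMC z) * (Y m z' - μMC z'))
    (gbar : F) (hgbar : gbar = (1 / (M : ℝ)) • ∑ m, g m)
    (σg : ℝ) (hσg : σg = Real.sqrt ((1 / ((M : ℝ) - 1)) * ∑ m, ‖g m - gbar‖ ^ 2))
    (σ : Fin N → ℝ)
    (hσ : ∀ i, σ i = Real.sqrt
      ((1 / ((M : ℝ) - 1)) * ∑ m, (Y m (x i) - μMC (x i)) ^ 2))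
    (C₁ : Matrix (Fin N) (Fin N) ℝ)
    (hC₁ : ∀ i j, C₁ i j = kMC (x i) (x j)) (hC₁unit : IsUnit C₁)
    (ρ : ℝ) (hρ₀ : 0 ≤ ρ) (hρ₁ : ρ ≤ 1) (μd : ℝ)
    (yL yH : Fin N → ℝ)
    (kd : D → D → ℝ)
    (C₂ : Matrix (Fin N) (Fin N) ℝ)
    (hC₂ : ∀ i j, C₂ i j = kd (x i) (x j)) (hC₂unit : IsUnit C₂)
    (a b q : Fin N → ℝ)
    (ha : a = C₁⁻¹.mulVec (yH - fun i => μMC (x i)))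
    (hb : b = C₁⁻¹.mulVec (yH - yL))
    (hq : q = C₂⁻¹.mulVec (yH - ρ • yL - fun _ => μd))
    (yhat : D → ℝ)
    (hyhat : ∀ z, yhat z =
      ρ * (μMC z + ∑ i, a i * kMC z (x i)) - ρ * ∑ i, b i * kMC z (x i)
        + μd + ∑ i, q i * kd z (x i)) :
    ‖L yhat - gbar‖ ≤
      ρ * ε + (1 - ρ) * ‖gbar‖
        + ρ * (2 * ε * Real.sqrt ((M : ℝ) / ((M : ℝ) - 1)) + σg) *
            matOpNorm C₁⁻¹ * euclNorm (yL - fun i => μMC (x i)) * (∑ i, σ i)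
        + ‖L (fun _ => μd)‖
        + matOpNorm C₂⁻¹ * euclNorm (yH - ρ • yL - fun _ => μd) *
            ∑ i, ‖L (fun z => kd z (x i))‖ := by
  have hM2 : (2:ℝ) ≤ (M:ℝ) := by exact_mod_cast hM
  have hMpos : (0:ℝ) < (M:ℝ) - 1 := by linarith
  have hM0 : (0:ℝ) < (M:ℝ) := by linarith
  set s := Real.sqrt ((M:ℝ) - 1) with hs
  have hs0 : 0 < s := Real.sqrt_pos.2 hMpos
  have hs2 : s ^ 2 = (M:ℝ) - 1 := Real.sq_sqrt hMpos.le
  have hσnn : ∀ i, 0 ≤ σ i := fun i => (hσ i) ▸ Real.sqrt_nonneg _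
  have hσgnn : 0 ≤ σg := hσg ▸ Real.sqrt_nonneg _
  -- mean as a function
  have hμfun : μMC = (1/(M:ℝ)) • ∑ m, Y m := by
    funext z
    simp [hμ, Finset.sum_apply]
  have hLμ : L μMC - gbar = (1/(M:ℝ)) • ∑ m, (L (Y m) - g m) := by
    rw [hμfun, hgbar, map_smul, map_sum, ← smul_sub, ← Finset.sum_sub_distrib]
  have hμbound : ‖L μMC - gbar‖ ≤ ε := by
    rw [hLμ, norm_smul, Real.norm_eq_abs, abs_of_pos (by positivity : (0:ℝ) < 1/(M:ℝ))]
    have h1 : ‖∑ m, (L (Y m) - g m)‖ ≤ (M:ℝ) * ε := by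
      refine (norm_sum_le _ _).trans ?_
      calc ∑ m, ‖L (Y m) - g m‖ ≤ ∑ _m : Fin M, ε := Finset.sum_le_sum fun m _ => hg m
        _ = (M:ℝ) * ε := by simp [Finset.sum_const, Finset.card_univ]
    calc (1/(M:ℝ)) * ‖∑ m, (L (Y m) - g m)‖ ≤ (1/(M:ℝ)) * ((M:ℝ) * ε) := by
          exact mul_le_mul_of_nonneg_left h1 (by positivity)
      _ = ε := by field_simp
  have hLY : ∀ m, ‖L (Y m) - L μMC‖ ≤ ‖g m - gbar‖ + 2*ε := by
    intro m
    have hdec : L (Y m) - L μMC = (L (Y m) - g m) + (g m - gbar) - (L μMC - gbar) := by abel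
    rw [hdec]
    calc ‖(L (Y m) - g m) + (g m - gbar) - (L μMC - gbar)‖
        ≤ ‖(L (Y m) - g m) + (g m - gbar)‖ + ‖L μMC - gbar‖ := norm_sub_le _ _
      _ ≤ ‖L (Y m) - g m‖ + ‖g m - gbar‖ + ‖L μMC - gbar‖ := by
          exact add_le_add_left (norm_add_le _ _) _
      _ ≤ ε + ‖g m - gbar‖ + ε := by
          exact add_le_add (add_le_add_left (hg m) _) hμbound
      _ = ‖g m - gbar‖ + 2*ε := by ring
  -- key kernel bound
  have hG : s * σg = Real.sqrt (∑ m, ‖g m - gbar‖ ^ 2) := by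
    rw [hσg, ← Real.sqrt_mul hMpos.le]
    congr 1
    field_simp
  have hkernel : ∀ i, ‖L (fun z => kMC z (x i))‖ ≤
      (2*ε*Real.sqrt ((M:ℝ)/((M:ℝ)-1)) + σg) * σ i := by
    intro i
    have hA : s * σ i = Real.sqrt (∑ m, (Y m (x i) - μMC (x i)) ^ 2) := by
      rw [hσ i, ← Real.sqrt_mul hMpos.le]
      congr 1
      field_simp
    have hfun : (fun z => kMC z (x i)) =
        (1/((M:ℝ)-1)) • ∑ m, (Y m (x i) - μMC (x i)) • (Y m - μMC) := by
      funext z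
      simp only [Pi.smul_apply, Finset.sum_apply, Pi.sub_apply, smul_eq_mul]
      rw [hk z (x i), Finset.mul_sum, Finset.mul_sum]
      exact Finset.sum_congr rfl fun m _ => by ring
    have hL : L (fun z => kMC z (x i)) =
        (1/((M:ℝ)-1)) • ∑ m, (Y m (x i) - μMC (x i)) • (L (Y m) - L μMC) := by
      rw [hfun, map_smul, map_sum]
      congr 1
      refine Finset.sum_congr rfl fun m _ => ?_
      rw [map_smul, map_sub]
    have h1 : ‖L (fun z => kMC z (x i))‖ ≤
        (1/((M:ℝ)-1)) * ∑ m, |Y m (x i) - μMC (x i)| * (‖g m - gbar‖ + 2*ε) := by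
      rw [hL, norm_smul, Real.norm_eq_abs,
        abs_of_pos (by positivity : (0:ℝ) < 1/((M:ℝ)-1))]
      refine mul_le_mul_of_nonneg_left ?_ (by positivity)
      refine (norm_sum_le _ _).trans (Finset.sum_le_sum fun m _ => ?_)
      rw [norm_smul, Real.norm_eq_abs]
      exact mul_le_mul_of_nonneg_left (hLY m) (abs_nonneg _)
    have hCS1 : ∑ m, |Y m (x i) - μMC (x i)| * ‖g m - gbar‖ ≤
        Real.sqrt (∑ m, (Y m (x i) - μMC (x i)) ^ 2) *
          Real.sqrt (∑ m, ‖g m - gbar‖ ^ 2) := by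
      have h := Real.sum_mul_le_sqrt_mul_sqrt Finset.univ
        (fun m => |Y m (x i) - μMC (x i)|) (fun m => ‖g m - gbar‖)
      simpa [sq_abs] using h
    have hCS2 : ∑ m, |Y m (x i) - μMC (x i)| ≤
        Real.sqrt (∑ m, (Y m (x i) - μMC (x i)) ^ 2) * Real.sqrt (M:ℝ) := by
      have h := Real.sum_mul_le_sqrt_mul_sqrt Finset.univ
        (fun m => |Y m (x i) - μMC (x i)|) (fun _ => (1:ℝ))
      simpa [sq_abs] using h
    have hsum : ∑ m, |Y m (x i) - μMC (x i)| * (‖g m - gbar‖ + 2*ε) =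
        (∑ m, |Y m (x i) - μMC (x i)| * ‖g m - gbar‖)
          + 2*ε * ∑ m, |Y m (x i) - μMC (x i)| := by
      rw [Finset.mul_sum, ← Finset.sum_add_distrib]
      exact Finset.sum_congr rfl fun m _ => by ring
    have h2 : ‖L (fun z => kMC z (x i))‖ ≤
        (1/((M:ℝ)-1)) * ((s * σ i) * (s * σg) + 2*ε * ((s * σ i) * Real.sqrt (M:ℝ))) := by
      refine h1.trans ?_
      rw [hsum, hA, hG]
      refine mul_le_mul_of_nonneg_left ?_ (by positivity)
      refine add_le_add hCS1 ?_
      rw [← hA]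
      rw [hA]
      exact mul_le_mul_of_nonneg_left hCS2 (by positivity)
    refine h2.trans_eq ?_
    have hdiv : Real.sqrt ((M:ℝ)/((M:ℝ)-1)) = Real.sqrt (M:ℝ) / s := by
      rw [hs, Real.sqrt_div hM0.le]
    rw [hdiv]
    have hM1s : (M:ℝ) - 1 = s ^ 2 := hs2.symm
    rw [hM1s]
    field_simp
    ring
  -- the combination coefficient a - b
  have hc : a - b = C₁⁻¹.mulVec (yL - fun i => μMC (x i)) := by
    have hv : (yH - fun i => μMC (x i)) - (yH - yL) = yL - fun i => μMC (x i) := by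
      funext j
      show yH j - μMC (x j) - (yH j - yL j) = yL j - μMC (x j)
      ring
    rw [ha, hb, ← Matrix.mulVec_sub, hv]
  have hcb : ∀ i, |a i - b i| ≤ matOpNorm C₁⁻¹ * euclNorm (yL - fun i => μMC (x i)) := by
    intro i
    calc |a i - b i| = |(a - b) i| := rfl
      _ ≤ euclNorm (a - b) := abs_le_euclNorm _ i
      _ = euclNorm (C₁⁻¹.mulVec (yL - fun i => μMC (x i))) := by rw [hc]
      _ ≤ matOpNorm C₁⁻¹ * euclNorm (yL - fun i => μMC (x i)) := euclNorm_mulVec_le _ _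
  have hqb : ∀ i, |q i| ≤ matOpNorm C₂⁻¹ * euclNorm (yH - ρ • yL - fun _ => μd) := by
    intro i
    calc |q i| ≤ euclNorm q := abs_le_euclNorm _ i
      _ = euclNorm (C₂⁻¹.mulVec (yH - ρ • yL - fun _ => μd)) := by rw [hq]
      _ ≤ matOpNorm C₂⁻¹ * euclNorm (yH - ρ • yL - fun _ => μd) := euclNorm_mulVec_le _ _
  -- decompose yhat as a function
  have hyfun : yhat = ρ • μMC + (∑ i, (ρ * (a i - b i)) • fun z => kMC z (x i))
      + (fun _ => μd) + ∑ i, q i • fun z => kd z (x i) := by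
    funext z
    simp only [Pi.add_apply, Pi.smul_apply, Finset.sum_apply, smul_eq_mul]
    rw [hyhat z]
    have hsplit : ∑ i, (ρ * (a i - b i)) * kMC z (x i)
        = ρ * ∑ i, a i * kMC z (x i) - ρ * ∑ i, b i * kMC z (x i) := by
      rw [Finset.mul_sum, Finset.mul_sum, ← Finset.sum_sub_distrib]
      exact Finset.sum_congr rfl fun i _ => by ring
    rw [hsplit]
    ring
  have hLy : L yhat = ρ • L μMC + (∑ i, (ρ * (a i - b i)) • L (fun z => kMC z (x i)))
      + L (fun _ => μd) + ∑ i, q i • L (fun z => kd z (x i)) := by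
    rw [hyfun]
    simp only [map_add, map_smul, map_sum]
  have hdiff : L yhat - gbar = ρ • (L μMC - gbar) + (-(1 - ρ)) • gbar
      + (∑ i, (ρ * (a i - b i)) • L (fun z => kMC z (x i)))
      + L (fun _ => μd) + ∑ i, q i • L (fun z => kd z (x i)) := by
    rw [hLy]
    module
  have h5 : ‖L yhat - gbar‖ ≤ ‖ρ • (L μMC - gbar)‖ + ‖(-(1 - ρ)) • gbar‖
      + ‖∑ i, (ρ * (a i - b i)) • L (fun z => kMC z (x i))‖
      + ‖L (fun _ => μd)‖ + ‖∑ i, q i • L (fun z => kd z (x i))‖ := by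
    rw [hdiff]
    refine le_trans (norm_add_le _ _) (add_le_add_left ?_ _)
    refine le_trans (norm_add_le _ _) (add_le_add_left ?_ _)
    refine le_trans (norm_add_le _ _) (add_le_add_left ?_ _)
    exact norm_add_le _ _
  have hb1 : ‖ρ • (L μMC - gbar)‖ ≤ ρ * ε := by
    rw [norm_smul, Real.norm_eq_abs, abs_of_nonneg hρ₀]
    exact mul_le_mul_of_nonneg_left hμbound hρ₀
  have hb2 : ‖(-(1 - ρ)) • gbar‖ = (1 - ρ) * ‖gbar‖ := by
    rw [norm_smul, Real.norm_eq_abs, abs_neg, abs_of_nonneg (by linarith)]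
  have hb3 : ‖∑ i, (ρ * (a i - b i)) • L (fun z => kMC z (x i))‖ ≤
      ρ * (2 * ε * Real.sqrt ((M : ℝ) / ((M : ℝ) - 1)) + σg) *
        matOpNorm C₁⁻¹ * euclNorm (yL - fun i => μMC (x i)) * (∑ i, σ i) := by
    have hBnn : 0 ≤ 2 * ε * Real.sqrt ((M : ℝ) / ((M : ℝ) - 1)) + σg := by positivity
    calc ‖∑ i, (ρ * (a i - b i)) • L (fun z => kMC z (x i))‖
        ≤ ∑ i, ‖(ρ * (a i - b i)) • L (fun z => kMC z (x i))‖ := norm_sum_le _ _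
      _ ≤ ∑ i, (ρ * (matOpNorm C₁⁻¹ * euclNorm (yL - fun i => μMC (x i)))) *
            ((2 * ε * Real.sqrt ((M : ℝ) / ((M : ℝ) - 1)) + σg) * σ i) := by
          refine Finset.sum_le_sum fun i _ => ?_
          rw [norm_smul, Real.norm_eq_abs, abs_mul, abs_of_nonneg hρ₀]
          refine mul_le_mul ?_ (hkernel i) (norm_nonneg _) ?_
          · exact mul_le_mul_of_nonneg_left (hcb i) hρ₀
          · have := euclNorm_nonneg (yL - fun i => μMC (x i))
            have := matOpNorm_nonneg (C₁⁻¹)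
            positivity
      _ = ρ * (2 * ε * Real.sqrt ((M : ℝ) / ((M : ℝ) - 1)) + σg) *
            matOpNorm C₁⁻¹ * euclNorm (yL - fun i => μMC (x i)) * (∑ i, σ i) := by
          rw [Finset.mul_sum]
          exact Finset.sum_congr rfl fun i _ => by ring
  have hb5 : ‖∑ i, q i • L (fun z => kd z (x i))‖ ≤
      matOpNorm C₂⁻¹ * euclNorm (yH - ρ • yL - fun _ => μd) *
        ∑ i, ‖L (fun z => kd z (x i))‖ := by
    calc ‖∑ i, q i • L (fun z => kd z (x i))‖
        ≤ ∑ i, ‖q i • L (fun z => kd z (x i))‖ := norm_sum_le _ _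
      _ ≤ ∑ i, (matOpNorm C₂⁻¹ * euclNorm (yH - ρ • yL - fun _ => μd)) *
            ‖L (fun z => kd z (x i))‖ := by
          refine Finset.sum_le_sum fun i _ => ?_
          rw [norm_smul, Real.norm_eq_abs]
          exact mul_le_mul_of_nonneg_right (hqb i) (norm_nonneg _)
      _ = matOpNorm C₂⁻¹ * euclNorm (yH - ρ • yL - fun _ => μd) *
            ∑ i, ‖L (fun z => kd z (x i))‖ := (Finset.mul_sum _ _ _).symm
  linarith [h5, hb1, hb3, hb5, hb2.le, hb2.ge]
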